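/- arXiv:2204.04434 — 4 statements merged into one kernel-verified Lean document; each statement's English description precedes it below -/
import Mathlib

section
/- Let s₀ > 0, σ ∈ ℝ with s₀ + σ < 0, and d₂ > 0, and let i, j ∈ ℕ be distinct. Then the discriminant (i²+j²)²(s₀+σ)² − 4i²j²(s₀+σ)s₀ is positive, d*_{i,j} > 0, s*_{i,j} > 0, and with d₁ = d*_{i,j} and s = s*_{i,j} one has Δ(i) = 0 and Δ(j) = 0; in particular, λ = 0 is a root of the characteristic polynomial P_k(λ) = λ² − Θ(k)λ + Δ(k) for both k = i and k = j. -/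
/-!
Write `p = i²`, `q = j²` and `a = s₀ + σ < 0`. As a polynomial in `K = k²`, `Δ` vanishes at `K`
exactly when `s = d₂ K (s₀ - d₁ K) / (d₁ K - a)`, so `Δ(i) = Δ(j) = 0` asks for these two values of
`s` to agree. Their difference is a multiple of `p q d₁² - (p + q) a d₁ + a s₀`, and `d*_{i,j}` is
the larger root of this quadratic in `d₁`. Its discriminant exceeds `((p + q) a)²` because
`a s₀ < 0`, which makes that root positive; the root relation then forces `s₀ - d₁ p > 0`, so the
common value `s*_{i,j}` is positive.
-/

open Real

/-- The determinant `Δ(k)` of the mode-`k` linearization, as a function of `K = k²`. -/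
def modeDet (d₁ d₂ s s₀ σ K : ℝ) : ℝ :=
  d₁ * d₂ * K ^ 2 + (s * d₁ - s₀ * d₂) * K - s * (s₀ + σ)

/-- `s*_{i,j} = criticalS d*_{i,j} d₂ s₀ σ (i²)`: the `s` at which `modeDet` vanishes at `K`. -/
noncomputable def criticalS (d₁ d₂ s₀ σ K : ℝ) : ℝ :=
  (s₀ * d₂ * K - d₁ * d₂ * K ^ 2) / (d₁ * K - (s₀ + σ))

theorem modeDet_criticalS {d₁ d₂ s₀ σ K : ℝ} (h : d₁ * K - (s₀ + σ) ≠ 0) :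
    modeDet d₁ d₂ (criticalS d₁ d₂ s₀ σ K) s₀ σ K = 0 := by
  unfold modeDet criticalS
  field_simp
  ring

section CriticalDiffusion

variable {p q s₀ σ d : ℝ}

theorem sq_lt_discrim (hp : 0 < p) (hq : 0 < q) (hs₀ : 0 < s₀) (hσ : s₀ + σ < 0) :
    ((p + q) * (s₀ + σ)) ^ 2 < discrim (p * q) (-((p + q) * (s₀ + σ))) ((s₀ + σ) * s₀) := by
  have : 0 < p * q * (-(s₀ + σ) * s₀) := by
    have := neg_pos.2 hσ
    positivity
  rw [discrim]
  linarith

theorem criticalDiffusion_pos (hp : 0 < p) (hq : 0 < q) (hs₀ : 0 < s₀) (hσ : s₀ + σ < 0) :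
    0 < ((p + q) * (s₀ + σ)
      + √(discrim (p * q) (-((p + q) * (s₀ + σ))) ((s₀ + σ) * s₀))) / (2 * (p * q)) := by
  have hlt : -((p + q) * (s₀ + σ)) < √(discrim (p * q) (-((p + q) * (s₀ + σ))) ((s₀ + σ) * s₀)) :=
    (Real.lt_sqrt (by nlinarith)).2 (by simpa using sq_lt_discrim hp hq hs₀ hσ)
  apply div_pos <;> nlinarith

theorem criticalDiffusion_isRoot (hp : 0 < p) (hq : 0 < q) (hs₀ : 0 < s₀) (hσ : s₀ + σ < 0)
    (hd : d = ((p + q) * (s₀ + σ)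
      + √(discrim (p * q) (-((p + q) * (s₀ + σ))) ((s₀ + σ) * s₀))) / (2 * (p * q))) :
    p * q * d ^ 2 - (p + q) * (s₀ + σ) * d + (s₀ + σ) * s₀ = 0 := by
  have hdisc := (lt_of_le_of_lt (sq_nonneg _) (sq_lt_discrim hp hq hs₀ hσ)).le
  have hroot := (quadratic_eq_zero_iff (mul_pos hp hq).ne' (mul_self_sqrt hdisc).symm d).2
    (Or.inl (by rw [hd, neg_neg]))
  linear_combination hroot

theorem sub_mul_pos_of_isRoot (hp : 0 ≤ p) (hq : 0 < q) (hσ : s₀ + σ < 0) (hd : 0 < d)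
    (hroot : p * q * d ^ 2 - (p + q) * (s₀ + σ) * d + (s₀ + σ) * s₀ = 0) :
    0 < s₀ - d * p := by
  have hrel : (s₀ + σ) * (s₀ - d * p) = d * q * ((s₀ + σ) - d * p) := by
    linear_combination hroot
  have : d * q * ((s₀ + σ) - d * p) < 0 :=
    mul_neg_of_pos_of_neg (mul_pos hd hq) (by nlinarith [mul_nonneg hd.le hp])
  nlinarith

theorem criticalS_pos {d₂ : ℝ} (hp : 0 < p) (hq : 0 < q) (hσ : s₀ + σ < 0) (hd₂ : 0 < d₂)
    (hd : 0 < d) (hroot : p * q * d ^ 2 - (p + q) * (s₀ + σ) * d + (s₀ + σ) * s₀ = 0) :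
    0 < criticalS d d₂ s₀ σ p := by
  have hsub := sub_mul_pos_of_isRoot hp.le hq hσ hd hroot
  have hnum : s₀ * d₂ * p - d * d₂ * p ^ 2 = d₂ * p * (s₀ - d * p) := by ring
  unfold criticalS
  rw [hnum]
  exact div_pos (by positivity) (by nlinarith [mul_pos hd hp])

theorem criticalS_eq_of_isRoot {d₂ : ℝ} (hp : d * p - (s₀ + σ) ≠ 0) (hq : d * q - (s₀ + σ) ≠ 0)
    (hroot : p * q * d ^ 2 - (p + q) * (s₀ + σ) * d + (s₀ + σ) * s₀ = 0) :
    criticalS d d₂ s₀ σ q = criticalS d d₂ s₀ σ p := by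
  unfold criticalS
  rw [div_eq_div_iff hq hp]
  linear_combination d₂ * (p - q) * hroot

end CriticalDiffusion

theorem stmt_4_general (s₀ σ d₂ : ℝ) (hs₀ : 0 < s₀) (hσ : s₀ + σ < 0) (hd₂ : 0 < d₂)
    (i j : ℕ) (hi : 0 < i) (hj : 0 < j)
    (disc dstar sstar : ℝ)
    (hdisc : disc = ((i : ℝ) ^ 2 + (j : ℝ) ^ 2) ^ 2 * (s₀ + σ) ^ 2
      - 4 * (i : ℝ) ^ 2 * (j : ℝ) ^ 2 * (s₀ + σ) * s₀)
    (hdstar : dstar = (((i : ℝ) ^ 2 + (j : ℝ) ^ 2) * (s₀ + σ) + Real.sqrt disc)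
      / (2 * (i : ℝ) ^ 2 * (j : ℝ) ^ 2))
    (hsstar : sstar = (s₀ * d₂ * (i : ℝ) ^ 2 - dstar * d₂ * (i : ℝ) ^ 4)
      / (dstar * (i : ℝ) ^ 2 - (s₀ + σ))) :
    0 < disc ∧ 0 < dstar ∧ 0 < sstar ∧
    -- with d₁ = d*_{i,j} and s = s*_{i,j}, Δ(i) = 0 and Δ(j) = 0
    (∀ k : ℕ, k = i ∨ k = j →
      dstar * d₂ * (k : ℝ) ^ 4 + (sstar * dstar - s₀ * d₂) * (k : ℝ) ^ 2
        - sstar * (s₀ + σ) = 0) ∧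
    -- in particular λ = 0 is a root of P_k(λ) = λ² − Θ(k)λ + Δ(k) for k = i and k = j
    (∀ k : ℕ, k = i ∨ k = j →
      (0 : ℝ) ^ 2 - (s₀ - sstar - (dstar + d₂) * (k : ℝ) ^ 2) * 0
        + (dstar * d₂ * (k : ℝ) ^ 4 + (sstar * dstar - s₀ * d₂) * (k : ℝ) ^ 2
          - sstar * (s₀ + σ)) = 0) := by
  have hp : 0 < (i : ℝ) ^ 2 := by positivity
  have hq : 0 < (j : ℝ) ^ 2 := by positivity
  have hdisc' : disc = discrim ((i : ℝ) ^ 2 * (j : ℝ) ^ 2) (-(((i : ℝ) ^ 2 + (j : ℝ) ^ 2) * (s₀ + σ)))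
      ((s₀ + σ) * s₀) := by rw [hdisc, discrim]; ring
  have hdstar' : dstar = (((i : ℝ) ^ 2 + (j : ℝ) ^ 2) * (s₀ + σ) + √disc)
      / (2 * ((i : ℝ) ^ 2 * (j : ℝ) ^ 2)) := by rw [hdstar, mul_assoc]
  rw [hdisc'] at hdstar'
  have hsstar' : sstar = criticalS dstar d₂ s₀ σ ((i : ℝ) ^ 2) := by rw [hsstar, criticalS]; ring
  have hdstar_pos : 0 < dstar := hdstar' ▸ criticalDiffusion_pos hp hq hs₀ hσ
  have hroot := criticalDiffusion_isRoot hp hq hs₀ hσ hdstar'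
  have hden : ∀ K : ℝ, 0 < K → dstar * K - (s₀ + σ) ≠ 0 := fun K hK ↦ by
    nlinarith [mul_pos hdstar_pos hK]
  have hΔ : ∀ k : ℕ, k = i ∨ k = j → modeDet dstar d₂ sstar s₀ σ ((k : ℝ) ^ 2) = 0 := by
    rintro k (rfl | rfl)
    · rw [hsstar']
      exact modeDet_criticalS (hden _ hp)
    · rw [hsstar', ← criticalS_eq_of_isRoot (hden _ hp) (hden _ hq) hroot]
      exact modeDet_criticalS (hden _ hq)
  refine ⟨hdisc' ▸ (sq_nonneg _).trans_lt (sq_lt_discrim hp hq hs₀ hσ), hdstar_pos,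
    hsstar' ▸ criticalS_pos hp hq hσ hd₂ hdstar_pos hroot, fun k hk ↦ ?_, fun k hk ↦ ?_⟩ <;>
  · have := hΔ k hk
    unfold modeDet at this
    linear_combination this

theorem stmt_4 (s₀ σ d₂ : ℝ) (hs₀ : 0 < s₀) (hσ : s₀ + σ < 0) (hd₂ : 0 < d₂)
    (i j : ℕ) (hi : 0 < i) (hj : 0 < j) (hij : i ≠ j)
    (disc dstar sstar : ℝ)
    (hdisc : disc = ((i : ℝ) ^ 2 + (j : ℝ) ^ 2) ^ 2 * (s₀ + σ) ^ 2
      - 4 * (i : ℝ) ^ 2 * (j : ℝ) ^ 2 * (s₀ + σ) * s₀)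
    (hdstar : dstar = (((i : ℝ) ^ 2 + (j : ℝ) ^ 2) * (s₀ + σ) + Real.sqrt disc)
      / (2 * (i : ℝ) ^ 2 * (j : ℝ) ^ 2))
    (hsstar : sstar = (s₀ * d₂ * (i : ℝ) ^ 2 - dstar * d₂ * (i : ℝ) ^ 4)
      / (dstar * (i : ℝ) ^ 2 - (s₀ + σ))) :
    0 < disc ∧ 0 < dstar ∧ 0 < sstar ∧
    -- with d₁ = d*_{i,j} and s = s*_{i,j}, Δ(i) = 0 and Δ(j) = 0
    (∀ k : ℕ, k = i ∨ k = j →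
      dstar * d₂ * (k : ℝ) ^ 4 + (sstar * dstar - s₀ * d₂) * (k : ℝ) ^ 2
        - sstar * (s₀ + σ) = 0) ∧
    -- in particular λ = 0 is a root of P_k(λ) = λ² − Θ(k)λ + Δ(k) for k = i and k = j
    (∀ k : ℕ, k = i ∨ k = j →
      (0 : ℝ) ^ 2 - (s₀ - sstar - (dstar + d₂) * (k : ℝ) ^ 2) * 0
        + (dstar * d₂ * (k : ℝ) ^ 4 + (sstar * dstar - s₀ * d₂) * (k : ℝ) ^ 2
          - sstar * (s₀ + σ)) = 0) :=
  stmt_4_general s₀ σ d₂ hs₀ hσ hd₂ i j hi hj disc dstar sstar hdisc hdstar hsstar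
end

section
/- Let s₀ > 0, σ ∈ ℝ with s₀ + σ < 0, d₂ > 0, and let i, j ∈ ℕ be distinct with d*_{i,j} i² − (s₀+σ) ≠ 0 and d*_{i,j} j² − (s₀+σ) ≠ 0 (which holds automatically since d*_{i,j} > 0 and s₀ + σ < 0). Define the Turing curves s_k(d₁) = (s₀d₂k² − d₁d₂k⁴)/(d₁k² − (s₀+σ)) for k ∈ ℕ. Then the curves for modes i and j intersect at (d*_{i,j}, s*_{i,j}): s_i(d*_{i,j}) = s*_{i,j} and s_j(d*_{i,j}) = s*_{i,j}. -/
/-! Cross-multiplying `s_x(d₁) = s_y(d₁)` gives `d₂ (x² − y²)` times the quadratic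
`x²y² d₁² − (x² + y²)(s₀ + σ) d₁ + (s₀ + σ) s₀`, so the curves of modes `x` and `y` meet above
every root of that quadratic, and `d*` is its larger root by the quadratic formula. -/

theorem turingCurve_eq_of_isRoot {s₀ c d₂ x y d : ℝ}
    (hx : d * x ^ 2 - c ≠ 0) (hy : d * y ^ 2 - c ≠ 0)
    (hroot : x ^ 2 * y ^ 2 * d ^ 2 - (x ^ 2 + y ^ 2) * c * d + c * s₀ = 0) :
    (s₀ * d₂ * y ^ 2 - d * d₂ * y ^ 4) / (d * y ^ 2 - c)
      = (s₀ * d₂ * x ^ 2 - d * d₂ * x ^ 4) / (d * x ^ 2 - c) := by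
  rw [div_eq_div_iff hy hx]
  linear_combination d₂ * (x ^ 2 - y ^ 2) * hroot

theorem isRoot_of_eq_quadraticFormula {s₀ c x y d : ℝ} (hx : x ≠ 0) (hy : y ≠ 0)
    (hdisc : 0 ≤ (x ^ 2 + y ^ 2) ^ 2 * c ^ 2 - 4 * x ^ 2 * y ^ 2 * c * s₀)
    (hd : d = ((x ^ 2 + y ^ 2) * c
      + √((x ^ 2 + y ^ 2) ^ 2 * c ^ 2 - 4 * x ^ 2 * y ^ 2 * c * s₀)) / (2 * x ^ 2 * y ^ 2)) :
    x ^ 2 * y ^ 2 * d ^ 2 - (x ^ 2 + y ^ 2) * c * d + c * s₀ = 0 := by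
  have hdiscrim : discrim (x ^ 2 * y ^ 2) (-((x ^ 2 + y ^ 2) * c)) (c * s₀)
      = (x ^ 2 + y ^ 2) ^ 2 * c ^ 2 - 4 * x ^ 2 * y ^ 2 * c * s₀ := by
    rw [discrim]; ring
  have hquad := (quadratic_eq_zero_iff (by positivity)
    (hdiscrim.trans (Real.mul_self_sqrt hdisc).symm) d).2 (.inl (by rw [hd]; ring_nf))
  linear_combination hquad

theorem stmt_6_general (s₀ σ d₂ : ℝ) (hs₀ : 0 < s₀) (hσ : s₀ + σ < 0)
    (i j : ℕ) (hi : 0 < i) (hj : 0 < j)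
    (dstar sstar : ℝ)
    (hdstar : dstar = (((i : ℝ) ^ 2 + (j : ℝ) ^ 2) * (s₀ + σ)
      + Real.sqrt (((i : ℝ) ^ 2 + (j : ℝ) ^ 2) ^ 2 * (s₀ + σ) ^ 2
          - 4 * (i : ℝ) ^ 2 * (j : ℝ) ^ 2 * (s₀ + σ) * s₀))
      / (2 * (i : ℝ) ^ 2 * (j : ℝ) ^ 2))
    (hsstar : sstar = (s₀ * d₂ * (i : ℝ) ^ 2 - dstar * d₂ * (i : ℝ) ^ 4)
      / (dstar * (i : ℝ) ^ 2 - (s₀ + σ)))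
    (hdeni : dstar * (i : ℝ) ^ 2 - (s₀ + σ) ≠ 0)
    (hdenj : dstar * (j : ℝ) ^ 2 - (s₀ + σ) ≠ 0)
    -- the Turing curves s_k(d₁) = (s₀d₂k² − d₁d₂k⁴)/(d₁k² − (s₀+σ))
    (scurve : ℕ → ℝ → ℝ)
    (hscurve : ∀ k : ℕ, ∀ d₁ : ℝ,
      scurve k d₁ = (s₀ * d₂ * (k : ℝ) ^ 2 - d₁ * d₂ * (k : ℝ) ^ 4)
        / (d₁ * (k : ℝ) ^ 2 - (s₀ + σ))) :
    scurve i dstar = sstar ∧ scurve j dstar = sstar := by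
  have hdisc : 0 ≤ ((i : ℝ) ^ 2 + (j : ℝ) ^ 2) ^ 2 * (s₀ + σ) ^ 2
      - 4 * (i : ℝ) ^ 2 * (j : ℝ) ^ 2 * (s₀ + σ) * s₀ := by
    have : (s₀ + σ) * s₀ < 0 := mul_neg_of_neg_of_pos hσ hs₀
    nlinarith [sq_nonneg (((i : ℝ) ^ 2 + (j : ℝ) ^ 2) * (s₀ + σ)), sq_nonneg ((i : ℝ) * j)]
  have hroot := isRoot_of_eq_quadraticFormula (by positivity) (by positivity) hdisc hdstar
  refine ⟨by rw [hscurve, hsstar], ?_⟩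
  rw [hscurve, hsstar]
  exact turingCurve_eq_of_isRoot hdeni hdenj hroot

theorem stmt_6 (s₀ σ d₂ : ℝ) (hs₀ : 0 < s₀) (hσ : s₀ + σ < 0) (hd₂ : 0 < d₂)
    (i j : ℕ) (hi : 0 < i) (hj : 0 < j) (hij : i ≠ j)
    (dstar sstar : ℝ)
    (hdstar : dstar = (((i : ℝ) ^ 2 + (j : ℝ) ^ 2) * (s₀ + σ)
      + Real.sqrt (((i : ℝ) ^ 2 + (j : ℝ) ^ 2) ^ 2 * (s₀ + σ) ^ 2
          - 4 * (i : ℝ) ^ 2 * (j : ℝ) ^ 2 * (s₀ + σ) * s₀))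
      / (2 * (i : ℝ) ^ 2 * (j : ℝ) ^ 2))
    (hsstar : sstar = (s₀ * d₂ * (i : ℝ) ^ 2 - dstar * d₂ * (i : ℝ) ^ 4)
      / (dstar * (i : ℝ) ^ 2 - (s₀ + σ)))
    (hdeni : dstar * (i : ℝ) ^ 2 - (s₀ + σ) ≠ 0)
    (hdenj : dstar * (j : ℝ) ^ 2 - (s₀ + σ) ≠ 0)
    -- the Turing curves s_k(d₁) = (s₀d₂k² − d₁d₂k⁴)/(d₁k² − (s₀+σ))
    (scurve : ℕ → ℝ → ℝ)
    (hscurve : ∀ k : ℕ, ∀ d₁ : ℝ,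
      scurve k d₁ = (s₀ * d₂ * (k : ℝ) ^ 2 - d₁ * d₂ * (k : ℝ) ^ 4)
        / (d₁ * (k : ℝ) ^ 2 - (s₀ + σ))) :
    scurve i dstar = sstar ∧ scurve j dstar = sstar :=
  stmt_6_general s₀ σ d₂ hs₀ hσ i j hi hj dstar sstar hdstar hsstar hdeni hdenj scurve hscurve
end

section
/- Let s₀ > 0, σ < 0 with s₀ + σ < 0, and d₂ > 0. For k ∈ ℕ define d_k* = (s₀/k²)(1 + σ/(d₂k² + s₀)) and let k₀* = max{ξ ∈ ℕ : d_ξ* = max_{k∈ℕ} d_k*}. Let k₀ ∈ ℕ with k₀ > k₀* (so k₀ ≥ 2), and set d₁ = d*_{k₀−1,k₀}, s = s*_{k₀−1,k₀}. Then: Δ(k₀−1) = 0 and Δ(k₀) = 0; Θ(k) < 0 for every k ∈ ℕ₀; and Δ(k) > 0 for every k ∈ ℕ₀ with k ∉ {k₀−1, k₀}. Consequently, for every k ∈ ℕ₀, every complex root λ of P_k(λ) = λ² − Θ(k)λ + Δ(k) satisfies: either λ = 0, which happens exactly when k ∈ {k₀−1, k₀} and is then a simple root, or Re λ < 0. -/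
/-!
Write `c = s₀ + σ`, `I = (k₀ - 1)²` and `J = k₀²`. The value `d₁ = d*_{k₀-1,k₀}` is the positive
root of `I J x² - (I + J) c x + c s₀`, and `s = s*_{k₀-1,k₀}` makes `Δ(k₀ - 1)` vanish; together
they give `s c = -I J d₁ d₂` and the factorization `Δ(k) = d₁ d₂ (k² - I) (k² - J)`, which is zero
at `k₀ - 1`, `k₀` and positive at every other integer.

As `Θ` is largest at `k = 0`, `Θ < 0` means `s > s₀`, and by `s c = -I J d₁ d₂` this follows from
`E(J, I) > 0`, where `E(y, z) = d₂² y z + c d₂ (y + z) + c s₀` (`modeGap`) has the sign of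
`d*(z) - d*(y)` for `z < y`, writing `d*(k²) = d_k*` (`modeThreshold`). If `E(J, I) ≤ 0`, then
`E(I, m²) ≤ 0` for all `m < k₀`, so `d_m* ≤ d_{k₀-1}* ≤ d_{k₀}*` and `k₀ > k₀*` would be a
maximizer of `k ↦ d_k*`.

Finally, a real quadratic `λ² - θλ + δ` with `θ < 0 ≤ δ` has its roots in the open left half-plane,
apart from the simple root `0` when `δ = 0`.
-/

noncomputable def modeThreshold (s₀ σ d₂ y : ℝ) : ℝ := s₀ / y * (1 + σ / (d₂ * y + s₀))

def modeGap (s₀ σ d₂ y z : ℝ) : ℝ :=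
  d₂ ^ 2 * y * z + (s₀ + σ) * d₂ * (y + z) + (s₀ + σ) * s₀

noncomputable def turingTuringD₁ (s₀ σ i j : ℝ) : ℝ :=
  ((i ^ 2 + j ^ 2) * (s₀ + σ)
    + Real.sqrt ((i ^ 2 + j ^ 2) ^ 2 * (s₀ + σ) ^ 2 - 4 * i ^ 2 * j ^ 2 * (s₀ + σ) * s₀))
    / (2 * i ^ 2 * j ^ 2)

section Threshold

variable {s₀ σ d₂ x y z : ℝ}

theorem modeThreshold_le_of_modeGap_nonpos (hs₀ : 0 < s₀) (hd₂ : 0 < d₂) (hz : 0 < z)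
    (hzy : z ≤ y) (hE : modeGap s₀ σ d₂ y z ≤ 0) :
    modeThreshold s₀ σ d₂ z ≤ modeThreshold s₀ σ d₂ y := by
  have hy : 0 < y := hz.trans_le hzy
  have hyd : 0 < d₂ * y + s₀ := by positivity
  have hzd : 0 < d₂ * z + s₀ := by positivity
  have key : modeThreshold s₀ σ d₂ y - modeThreshold s₀ σ d₂ z
      = s₀ * (y - z) * -modeGap s₀ σ d₂ y z / (y * z * ((d₂ * y + s₀) * (d₂ * z + s₀))) := by
    unfold modeThreshold modeGap
    field_simp
    ring
  rw [← sub_nonneg, key]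
  have : 0 ≤ s₀ * (y - z) * -modeGap s₀ σ d₂ y z :=
    mul_nonneg (mul_nonneg hs₀.le (sub_nonneg.2 hzy)) (neg_nonneg.2 hE)
  positivity

theorem modeGap_nonpos_of_le (hs₀ : 0 < s₀) (hc : s₀ + σ < 0) (hd₂ : 0 < d₂) (hz : 0 < z)
    (hzy : z ≤ y) (hyx : y ≤ x) (hE : modeGap s₀ σ d₂ x y ≤ 0) : modeGap s₀ σ d₂ y z ≤ 0 := by
  unfold modeGap at *
  rcases le_or_gt 0 (d₂ * y + (s₀ + σ)) with h | h
  · nlinarith [mul_nonneg (mul_nonneg hd₂.le (sub_nonneg.2 (hzy.trans hyx))) h]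
  · nlinarith [mul_neg_of_pos_of_neg (mul_pos hd₂ hz) h,
      mul_neg_of_neg_of_pos hc (by nlinarith : 0 < d₂ * y + s₀)]

theorem modeGap_pos_of_lt_largest_maximizer (hs₀ : 0 < s₀) (hc : s₀ + σ < 0) (hd₂ : 0 < d₂)
    {d : ℕ → ℝ} (hd : ∀ k : ℕ, d k = modeThreshold s₀ σ d₂ ((k : ℝ) ^ 2))
    {k₀star k₀ : ℕ} (hk₀star_pos : 0 < k₀star)
    (hk₀star_max : ∀ k : ℕ, 0 < k → d k ≤ d k₀star)
    (hk₀star_largest : ∀ ξ : ℕ, 0 < ξ → (∀ k : ℕ, 0 < k → d k ≤ d ξ) → ξ ≤ k₀star)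
    (hk₀ : k₀star < k₀) :
    0 < modeGap s₀ σ d₂ ((k₀ : ℝ) ^ 2) (((k₀ : ℝ) - 1) ^ 2) := by
  by_contra! hE
  have hk₀one : (1 : ℝ) ≤ (k₀ : ℝ) - 1 := by
    have : (2 : ℝ) ≤ k₀ := by exact_mod_cast (by omega : 2 ≤ k₀)
    linarith
  have hbelow : ∀ m : ℕ, 0 < m → m < k₀ → d m ≤ d k₀ := by
    intro m hm hmk
    have hmk' : (m : ℝ) ≤ (k₀ : ℝ) - 1 := by
      have : (m : ℝ) + 1 ≤ k₀ := by exact_mod_cast hmk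
      linarith
    have hzy : (m : ℝ) ^ 2 ≤ ((k₀ : ℝ) - 1) ^ 2 := by gcongr
    have hyx : ((k₀ : ℝ) - 1) ^ 2 ≤ (k₀ : ℝ) ^ 2 := by gcongr; linarith
    have hz : (0 : ℝ) < (m : ℝ) ^ 2 := by positivity
    rw [hd, hd]
    exact (modeThreshold_le_of_modeGap_nonpos hs₀ hd₂ hz hzy
      (modeGap_nonpos_of_le hs₀ hc hd₂ hz hzy hyx hE)).trans
      (modeThreshold_le_of_modeGap_nonpos hs₀ hd₂ (hz.trans_le hzy) hyx hE)
  have := hk₀star_largest k₀ (by omega) fun k hk =>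
    (hk₀star_max k hk).trans (hbelow k₀star hk₀star_pos hk₀)
  omega

end Threshold

section TuringTuring

variable {s₀ σ d₂ a b d₁ s : ℝ}

theorem turingTuringD₁_isRoot (ha : a ≠ 0) (hb : b ≠ 0) (hcs : (s₀ + σ) * s₀ < 0) :
    a ^ 2 * b ^ 2 * turingTuringD₁ s₀ σ a b ^ 2
      - (a ^ 2 + b ^ 2) * (s₀ + σ) * turingTuringD₁ s₀ σ a b + (s₀ + σ) * s₀ = 0 := by
  have hD : 2 * a ^ 2 * b ^ 2 * turingTuringD₁ s₀ σ a b - (a ^ 2 + b ^ 2) * (s₀ + σ)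
      = √((a ^ 2 + b ^ 2) ^ 2 * (s₀ + σ) ^ 2 - 4 * a ^ 2 * b ^ 2 * (s₀ + σ) * s₀) := by
    unfold turingTuringD₁
    field_simp
    ring
  have hdisc : (2 * a ^ 2 * b ^ 2 * turingTuringD₁ s₀ σ a b - (a ^ 2 + b ^ 2) * (s₀ + σ)) ^ 2
      = (a ^ 2 + b ^ 2) ^ 2 * (s₀ + σ) ^ 2 - 4 * a ^ 2 * b ^ 2 * (s₀ + σ) * s₀ := by
    have hab : 0 < a ^ 2 * b ^ 2 := by positivity
    rw [hD, Real.sq_sqrt (by nlinarith [sq_nonneg ((a ^ 2 + b ^ 2) * (s₀ + σ))])]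
  have h4ab : 4 * a ^ 2 * b ^ 2 ≠ 0 := by positivity
  refine (mul_eq_zero.1 ?_).resolve_left h4ab
  linear_combination hdisc

theorem turingTuringD₁_pos (ha : a ≠ 0) (hb : b ≠ 0) (hcs : (s₀ + σ) * s₀ < 0) :
    0 < turingTuringD₁ s₀ σ a b := by
  have hab : 0 < a ^ 2 * b ^ 2 := by positivity
  have hlt : |(a ^ 2 + b ^ 2) * (s₀ + σ)|
      < √((a ^ 2 + b ^ 2) ^ 2 * (s₀ + σ) ^ 2 - 4 * a ^ 2 * b ^ 2 * (s₀ + σ) * s₀) := by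
    rw [Real.lt_sqrt (abs_nonneg _), sq_abs]
    nlinarith
  unfold turingTuringD₁
  have := neg_abs_le ((a ^ 2 + b ^ 2) * (s₀ + σ))
  apply div_pos (by linarith) (by positivity)

theorem s_mul_eq_of_isRoot (hc : s₀ + σ < 0) (hd₁ : 0 ≤ d₁)
    (hq : a ^ 2 * b ^ 2 * d₁ ^ 2 - (a ^ 2 + b ^ 2) * (s₀ + σ) * d₁ + (s₀ + σ) * s₀ = 0)
    (hs : s = (s₀ * d₂ * a ^ 2 - d₁ * d₂ * a ^ 4) / (d₁ * a ^ 2 - (s₀ + σ))) :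
    s * (s₀ + σ) = -(a ^ 2 * b ^ 2 * d₁ * d₂) := by
  have hden : d₁ * a ^ 2 - (s₀ + σ) ≠ 0 := by nlinarith [mul_nonneg hd₁ (sq_nonneg a)]
  rw [eq_div_iff hden] at hs
  have h : (s * (s₀ + σ) + a ^ 2 * b ^ 2 * d₁ * d₂) * (d₁ * a ^ 2 - (s₀ + σ)) = 0 := by
    linear_combination (s₀ + σ) * hs + d₂ * a ^ 2 * hq
  exact eq_neg_of_add_eq_zero_left ((mul_eq_zero.1 h).resolve_right hden)

theorem det_eq_mul_of_isRoot (hc : s₀ + σ ≠ 0)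
    (hq : a ^ 2 * b ^ 2 * d₁ ^ 2 - (a ^ 2 + b ^ 2) * (s₀ + σ) * d₁ + (s₀ + σ) * s₀ = 0)
    (hsc : s * (s₀ + σ) = -(a ^ 2 * b ^ 2 * d₁ * d₂)) (x : ℝ) :
    d₁ * d₂ * x ^ 4 + (s * d₁ - s₀ * d₂) * x ^ 2 - s * (s₀ + σ)
      = d₁ * d₂ * (x ^ 2 - a ^ 2) * (x ^ 2 - b ^ 2) := by
  have h : (s * d₁ - s₀ * d₂ + (a ^ 2 + b ^ 2) * d₁ * d₂) * (s₀ + σ) = 0 := by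
    linear_combination d₁ * hsc - d₂ * hq
  have hsum := (mul_eq_zero.1 h).resolve_right hc
  linear_combination x ^ 2 * hsum - hsc

theorem lt_s_of_modeGap_pos (hs₀ : 0 < s₀) (hc : s₀ + σ < 0) (hd₂ : 0 ≤ d₂) (hd₁ : 0 ≤ d₁)
    (hq : a ^ 2 * b ^ 2 * d₁ ^ 2 - (a ^ 2 + b ^ 2) * (s₀ + σ) * d₁ + (s₀ + σ) * s₀ = 0)
    (hsc : s * (s₀ + σ) = -(a ^ 2 * b ^ 2 * d₁ * d₂))
    (hE : 0 < modeGap s₀ σ d₂ (b ^ 2) (a ^ 2)) : s₀ < s := by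
  set T := a ^ 2 * b ^ 2 * d₁ * d₂ + s₀ * (s₀ + σ)
  have hprod : T * (T - 2 * s₀ * (s₀ + σ) - (a ^ 2 + b ^ 2) * (s₀ + σ) * d₂)
      = -((s₀ + σ) * s₀ * modeGap s₀ σ d₂ (b ^ 2) (a ^ 2)) := by
    unfold modeGap
    linear_combination d₂ ^ 2 * a ^ 2 * b ^ 2 * hq
  have hfactor : 0 < T - 2 * s₀ * (s₀ + σ) - (a ^ 2 + b ^ 2) * (s₀ + σ) * d₂ := by
    have : 0 ≤ a ^ 2 * b ^ 2 * d₁ * d₂ := by positivity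
    nlinarith [mul_nonneg (add_nonneg (sq_nonneg a) (sq_nonneg b)) hd₂,
      mul_neg_of_pos_of_neg hs₀ hc]
  have hT : 0 < T := by
    refine (mul_pos_iff_of_pos_right hfactor).1 ?_
    rw [hprod, neg_pos]
    exact mul_neg_of_neg_of_pos (mul_neg_of_neg_of_pos hc hs₀) hE
  exact (mul_lt_mul_right_of_neg hc).1 (by linarith)

end TuringTuring

theorem eq_zero_or_re_neg_of_sq_sub_mul_add_eq_zero {θ δ : ℝ} (hθ : θ < 0) (hδ : 0 ≤ δ) {z : ℂ}
    (h : z ^ 2 - θ * z + δ = 0) : (z = 0 ∧ δ = 0) ∨ z.re < 0 := by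
  rcases hδ.eq_or_lt with rfl | hδ
  · rw [Complex.ofReal_zero, add_zero] at h
    have : z * (z - θ) = 0 := by linear_combination h
    rcases mul_eq_zero.1 this with hz | hz
    · exact Or.inl ⟨hz, rfl⟩
    · right
      rw [sub_eq_zero.1 hz, Complex.ofReal_re]
      exact hθ
  · right
    have hre := congrArg Complex.re h
    have him := congrArg Complex.im h
    simp only [sq, Complex.add_re, Complex.sub_re, Complex.mul_re, Complex.ofReal_re,
      Complex.ofReal_im, Complex.zero_re, Complex.add_im, Complex.sub_im, Complex.mul_im,
      Complex.zero_im] at hre him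
    rcases eq_or_ne z.im 0 with hy | hy
    · rw [hy] at hre
      nlinarith
    · have : z.im * (2 * z.re - θ) = 0 := by linear_combination him
      linarith [(mul_eq_zero.1 this).resolve_left hy]

section TwoModes

variable {k n : ℕ}

theorem sq_sub_sq_mul_sq_sub_sq_pos (hn : 1 ≤ n) (h₁ : k ≠ n - 1) (h₂ : k ≠ n) :
    0 < ((k : ℝ) ^ 2 - ((n : ℝ) - 1) ^ 2) * ((k : ℝ) ^ 2 - (n : ℝ) ^ 2) := by
  rcases (by omega : k + 2 ≤ n ∨ n + 1 ≤ k) with h | h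
  · have h' : (k : ℝ) + 2 ≤ n := by exact_mod_cast h
    apply mul_pos_of_neg_of_neg <;> nlinarith [(k.cast_nonneg : (0 : ℝ) ≤ k)]
  · have h' : (n : ℝ) + 1 ≤ k := by exact_mod_cast h
    have hn' : (1 : ℝ) ≤ n := by exact_mod_cast hn
    apply mul_pos <;> nlinarith

theorem sq_sub_sq_mul_sq_sub_sq_eq_zero_iff (hn : 1 ≤ n) :
    ((k : ℝ) ^ 2 - ((n : ℝ) - 1) ^ 2) * ((k : ℝ) ^ 2 - (n : ℝ) ^ 2) = 0 ↔ k = n - 1 ∨ k = n := by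
  refine ⟨fun h => by_contra fun hk =>
    (sq_sub_sq_mul_sq_sub_sq_pos hn (not_or.1 hk).1 (not_or.1 hk).2).ne' h, ?_⟩
  rintro (rfl | rfl)
  · rw [Nat.cast_pred hn]
    ring
  · ring

theorem sq_sub_sq_mul_sq_sub_sq_nonneg (hn : 1 ≤ n) :
    0 ≤ ((k : ℝ) ^ 2 - ((n : ℝ) - 1) ^ 2) * ((k : ℝ) ^ 2 - (n : ℝ) ^ 2) := by
  by_cases hk : k = n - 1 ∨ k = n
  · exact ((sq_sub_sq_mul_sq_sub_sq_eq_zero_iff hn).2 hk).ge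
  · exact (sq_sub_sq_mul_sq_sub_sq_pos hn (not_or.1 hk).1 (not_or.1 hk).2).le

end TwoModes

theorem stmt_8_general (s₀ σ d₂ : ℝ) (hs₀ : 0 < s₀) (hsσ : s₀ + σ < 0) (hd₂ : 0 < d₂)
    -- d_k* = (s₀/k²)(1 + σ/(d₂k² + s₀))
    (d : ℕ → ℝ)
    (hd : ∀ k : ℕ, d k = (s₀ / (k : ℝ) ^ 2) * (1 + σ / (d₂ * (k : ℝ) ^ 2 + s₀)))
    -- k₀* is the largest maximizer of k ↦ d_k* over ℕ = {1, 2, …}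
    (k₀star : ℕ) (hk₀star_pos : 0 < k₀star)
    (hk₀star_max : ∀ k : ℕ, 0 < k → d k ≤ d k₀star)
    (hk₀star_largest : ∀ ξ : ℕ, 0 < ξ → (∀ k : ℕ, 0 < k → d k ≤ d ξ) → ξ ≤ k₀star)
    (k₀ : ℕ) (hk₀ : k₀star < k₀)
    -- d₁ = d*_{k₀−1,k₀} and s = s*_{k₀−1,k₀}
    (d₁ s : ℝ)
    (hd₁ : d₁ = ((((k₀ : ℝ) - 1) ^ 2 + (k₀ : ℝ) ^ 2) * (s₀ + σ)
      + Real.sqrt (((((k₀ : ℝ) - 1) ^ 2 + (k₀ : ℝ) ^ 2) ^ 2 * (s₀ + σ) ^ 2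
          - 4 * ((k₀ : ℝ) - 1) ^ 2 * (k₀ : ℝ) ^ 2 * (s₀ + σ) * s₀)))
      / (2 * ((k₀ : ℝ) - 1) ^ 2 * (k₀ : ℝ) ^ 2))
    (hs : s = (s₀ * d₂ * ((k₀ : ℝ) - 1) ^ 2 - d₁ * d₂ * ((k₀ : ℝ) - 1) ^ 4)
      / (d₁ * ((k₀ : ℝ) - 1) ^ 2 - (s₀ + σ)))
    -- Δ(k) and Θ(k)
    (Δ Θ : ℕ → ℝ)
    (hΔ : ∀ k : ℕ, Δ k = d₁ * d₂ * (k : ℝ) ^ 4 + (s * d₁ - s₀ * d₂) * (k : ℝ) ^ 2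
      - s * (s₀ + σ))
    (hΘ : ∀ k : ℕ, Θ k = s₀ - s - (d₁ + d₂) * (k : ℝ) ^ 2) :
    2 ≤ k₀ ∧
    Δ (k₀ - 1) = 0 ∧ Δ k₀ = 0 ∧
    (∀ k : ℕ, Θ k < 0) ∧
    (∀ k : ℕ, k ≠ k₀ - 1 → k ≠ k₀ → 0 < Δ k) ∧
    -- every complex root λ of P_k(λ) = λ² − Θ(k)λ + Δ(k) is either a simple zero root
    -- (happening exactly when k ∈ {k₀−1, k₀}) or has negative real part
    (∀ k : ℕ, ∀ lam : ℂ,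
      lam ^ 2 - (Θ k : ℂ) * lam + (Δ k : ℂ) = 0 →
        (lam = 0 ∧ (k = k₀ - 1 ∨ k = k₀) ∧ Θ k ≠ 0) ∨ lam.re < 0) ∧
    (∀ k : ℕ,
      ((0 : ℂ) ^ 2 - (Θ k : ℂ) * 0 + (Δ k : ℂ) = 0 ↔ (k = k₀ - 1 ∨ k = k₀))) := by
  have hk₀two : 2 ≤ k₀ := by omega
  have ha : (k₀ : ℝ) - 1 ≠ 0 := by
    have : (2 : ℝ) ≤ k₀ := by exact_mod_cast hk₀two
    linarith
  have hb : (k₀ : ℝ) ≠ 0 := by positivity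
  have hcs : (s₀ + σ) * s₀ < 0 := mul_neg_of_neg_of_pos hsσ hs₀
  have hd₁' : d₁ = turingTuringD₁ s₀ σ ((k₀ : ℝ) - 1) k₀ := hd₁
  have hd₁_pos : 0 < d₁ := hd₁' ▸ turingTuringD₁_pos ha hb hcs
  have hq := hd₁' ▸ turingTuringD₁_isRoot ha hb hcs
  have hsc := s_mul_eq_of_isRoot hsσ hd₁_pos.le hq hs
  have hs₀s := lt_s_of_modeGap_pos hs₀ hsσ hd₂.le hd₁_pos.le hq hsc
    (modeGap_pos_of_lt_largest_maximizer hs₀ hsσ hd₂ hd hk₀star_pos hk₀star_max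
      hk₀star_largest hk₀)
  have hΘneg (k : ℕ) : Θ k < 0 := by
    rw [hΘ]
    nlinarith [sq_nonneg (k : ℝ)]
  have hΔfac (k : ℕ) : Δ k = d₁ * d₂
      * (((k : ℝ) ^ 2 - ((k₀ : ℝ) - 1) ^ 2) * ((k : ℝ) ^ 2 - (k₀ : ℝ) ^ 2)) := by
    rw [hΔ, det_eq_mul_of_isRoot hsσ.ne hq hsc, mul_assoc]
  have hd₁d₂ : 0 < d₁ * d₂ := mul_pos hd₁_pos hd₂
  have hΔpos (k : ℕ) (h₁ : k ≠ k₀ - 1) (h₂ : k ≠ k₀) : 0 < Δ k :=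
    hΔfac k ▸ mul_pos hd₁d₂ (sq_sub_sq_mul_sq_sub_sq_pos (by omega) h₁ h₂)
  have hΔnonneg (k : ℕ) : 0 ≤ Δ k :=
    hΔfac k ▸ mul_nonneg hd₁d₂.le (sq_sub_sq_mul_sq_sub_sq_nonneg (by omega))
  have hΔzero (k : ℕ) : Δ k = 0 ↔ k = k₀ - 1 ∨ k = k₀ := by
    rw [hΔfac, mul_eq_zero, or_iff_right hd₁d₂.ne', sq_sub_sq_mul_sq_sub_sq_eq_zero_iff (by omega)]
  refine ⟨hk₀two, (hΔzero _).2 (Or.inl rfl), (hΔzero _).2 (Or.inr rfl), hΘneg, hΔpos,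
    fun k lam hlam => ?_, fun k => ?_⟩
  · rcases eq_zero_or_re_neg_of_sq_sub_mul_add_eq_zero (hΘneg k) (hΔnonneg k) hlam with
      ⟨hlam0, hΔ0⟩ | hre
    · exact Or.inl ⟨hlam0, (hΔzero k).1 hΔ0, (hΘneg k).ne⟩
    · exact Or.inr hre
  · simpa using hΔzero k

theorem stmt_8 (s₀ σ d₂ : ℝ) (hs₀ : 0 < s₀) (hσ : σ < 0) (hsσ : s₀ + σ < 0) (hd₂ : 0 < d₂)
    -- d_k* = (s₀/k²)(1 + σ/(d₂k² + s₀))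
    (d : ℕ → ℝ)
    (hd : ∀ k : ℕ, d k = (s₀ / (k : ℝ) ^ 2) * (1 + σ / (d₂ * (k : ℝ) ^ 2 + s₀)))
    -- k₀* is the largest maximizer of k ↦ d_k* over ℕ = {1, 2, …}
    (k₀star : ℕ) (hk₀star_pos : 0 < k₀star)
    (hk₀star_max : ∀ k : ℕ, 0 < k → d k ≤ d k₀star)
    (hk₀star_largest : ∀ ξ : ℕ, 0 < ξ → (∀ k : ℕ, 0 < k → d k ≤ d ξ) → ξ ≤ k₀star)
    (k₀ : ℕ) (hk₀ : k₀star < k₀)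
    -- d₁ = d*_{k₀−1,k₀} and s = s*_{k₀−1,k₀}
    (d₁ s : ℝ)
    (hd₁ : d₁ = ((((k₀ : ℝ) - 1) ^ 2 + (k₀ : ℝ) ^ 2) * (s₀ + σ)
      + Real.sqrt (((((k₀ : ℝ) - 1) ^ 2 + (k₀ : ℝ) ^ 2) ^ 2 * (s₀ + σ) ^ 2
          - 4 * ((k₀ : ℝ) - 1) ^ 2 * (k₀ : ℝ) ^ 2 * (s₀ + σ) * s₀)))
      / (2 * ((k₀ : ℝ) - 1) ^ 2 * (k₀ : ℝ) ^ 2))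
    (hs : s = (s₀ * d₂ * ((k₀ : ℝ) - 1) ^ 2 - d₁ * d₂ * ((k₀ : ℝ) - 1) ^ 4)
      / (d₁ * ((k₀ : ℝ) - 1) ^ 2 - (s₀ + σ)))
    -- Δ(k) and Θ(k)
    (Δ Θ : ℕ → ℝ)
    (hΔ : ∀ k : ℕ, Δ k = d₁ * d₂ * (k : ℝ) ^ 4 + (s * d₁ - s₀ * d₂) * (k : ℝ) ^ 2
      - s * (s₀ + σ))
    (hΘ : ∀ k : ℕ, Θ k = s₀ - s - (d₁ + d₂) * (k : ℝ) ^ 2) :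
    2 ≤ k₀ ∧
    Δ (k₀ - 1) = 0 ∧ Δ k₀ = 0 ∧
    (∀ k : ℕ, Θ k < 0) ∧
    (∀ k : ℕ, k ≠ k₀ - 1 → k ≠ k₀ → 0 < Δ k) ∧
    -- every complex root λ of P_k(λ) = λ² − Θ(k)λ + Δ(k) is either a simple zero root
    -- (happening exactly when k ∈ {k₀−1, k₀}) or has negative real part
    (∀ k : ℕ, ∀ lam : ℂ,
      lam ^ 2 - (Θ k : ℂ) * lam + (Δ k : ℂ) = 0 →
        (lam = 0 ∧ (k = k₀ - 1 ∨ k = k₀) ∧ Θ k ≠ 0) ∨ lam.re < 0) ∧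
    (∀ k : ℕ,
      ((0 : ℂ) ^ 2 - (Θ k : ℂ) * 0 + (Δ k : ℂ) = 0 ↔ (k = k₀ - 1 ∨ k = k₀))) :=
  stmt_8_general s₀ σ d₂ hs₀ hsσ hd₂ d hd k₀star hk₀star_pos hk₀star_max hk₀star_largest k₀ hk₀ d₁ s
    hd₁ hs Δ Θ hΔ hΘ
end

section
/- Let m, a, b > 0 with a + b ≥ ab, and let s > 0. Then there is a unique u > 0 such that (1−u)(1+au)(1+bu) = mu, and this u lies in (0,1). Consequently, the kinetic system f(u,v) = u(1−u) − muv/((1+au)(1+bv)) = 0, g(u,v) = sv(1 − v/u) = 0 has a unique solution (u*, v*) with u* > 0 and v* > 0, and it satisfies v* = u*. -/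
/-!
Subtracting `u₂ ·` (equation at `u₁`) from `u₁ ·` (equation at `u₂`) factors as
`(u₂ - u₁) (1 + (a + b - ab) u₁u₂ + ab u₁u₂ (u₁ + u₂)) = 0`, and the second factor is positive
when `ab ≤ a + b`; so the cubic `(1 - u)(1 + au)(1 + bu) = mu` has at most one positive root.
A root in `(0, 1)` exists by the intermediate value theorem, since the difference of the two sides
is `1` at `u = 0` and `-m` at `u = 1`. At an interior equilibrium the predator equation forces
`v = u`, and then the prey equation is exactly the cubic.
-/

namespace CrowleyMartin

theorem eq_of_cubic_eq {a b m u₁ u₂ : ℝ} (ha : 0 ≤ a) (hb : 0 ≤ b) (hab : a * b ≤ a + b)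
    (hu₁ : 0 < u₁) (hu₂ : 0 < u₂)
    (h₁ : (1 - u₁) * (1 + a * u₁) * (1 + b * u₁) = m * u₁)
    (h₂ : (1 - u₂) * (1 + a * u₂) * (1 + b * u₂) = m * u₂) : u₁ = u₂ := by
  have hfactor : (u₂ - u₁) * (1 + (a + b - a * b) * (u₁ * u₂)
      + a * b * (u₁ * u₂) * (u₁ + u₂)) = 0 := by
    linear_combination u₂ * h₁ - u₁ * h₂
  have hprod : 0 < u₁ * u₂ := mul_pos hu₁ hu₂
  have hpos : 0 < 1 + (a + b - a * b) * (u₁ * u₂) + a * b * (u₁ * u₂) * (u₁ + u₂) := by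
    have : 0 ≤ a * b * (u₁ * u₂) * (u₁ + u₂) := by positivity
    nlinarith [mul_nonneg (sub_nonneg.2 hab) hprod.le]
  linarith [(mul_eq_zero.1 hfactor).resolve_right hpos.ne']

theorem exists_cubic_eq_mem_Ioo (a b : ℝ) {m : ℝ} (hm : 0 < m) :
    ∃ u ∈ Set.Ioo (0 : ℝ) 1, (1 - u) * (1 + a * u) * (1 + b * u) = m * u := by
  have hcont : ContinuousOn (fun u : ℝ => (1 - u) * (1 + a * u) * (1 + b * u) - m * u)
      (Set.Icc 0 1) := by fun_prop
  have hzero : (0 : ℝ) ∈ Set.Ioo ((1 - 1) * (1 + a * 1) * (1 + b * 1) - m * 1)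
      ((1 - 0) * (1 + a * 0) * (1 + b * 0) - m * 0) := by
    constructor <;> norm_num [hm]
  obtain ⟨u, hu, hroot⟩ := intermediate_value_Ioo' zero_le_one hcont hzero
  exact ⟨u, hu, sub_eq_zero.1 hroot⟩

theorem lt_one_of_cubic_eq {a b m u : ℝ} (ha : 0 ≤ a) (hb : 0 ≤ b) (hm : 0 < m) (hu : 0 < u)
    (h : (1 - u) * (1 + a * u) * (1 + b * u) = m * u) : u < 1 := by
  by_contra! h₁
  have : (1 - u) * ((1 + a * u) * (1 + b * u)) ≤ 0 :=
    mul_nonpos_of_nonpos_of_nonneg (by linarith) (by positivity)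
  nlinarith [mul_pos hm hu]

theorem predator_eq_zero_iff {s u v : ℝ} (hs : s ≠ 0) (hu : u ≠ 0) (hv : v ≠ 0) :
    s * v * (1 - v / u) = 0 ↔ v = u := by
  simp only [mul_eq_zero, hs, hv, false_or, sub_eq_zero, eq_comm (a := (1 : ℝ)),
    div_eq_one_iff_eq hu]

theorem prey_diag_eq_zero_iff {a b m u : ℝ} (ha : 0 ≤ a) (hb : 0 ≤ b) (hu : 0 < u) :
    u * (1 - u) - m * u * u / ((1 + a * u) * (1 + b * u)) = 0 ↔
      (1 - u) * (1 + a * u) * (1 + b * u) = m * u := by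
  have hden : (1 + a * u) * (1 + b * u) ≠ 0 := by positivity
  rw [sub_eq_zero, eq_div_iff hden]
  constructor
  · intro h
    exact mul_left_cancel₀ hu.ne' (by linear_combination h)
  · intro h
    linear_combination u * h

end CrowleyMartin

open CrowleyMartin in
theorem stmt_10 (m a b s : ℝ) (hm : 0 < m) (ha : 0 < a) (hb : 0 < b)
    (hab : a * b ≤ a + b) (hs : 0 < s) :
    -- unique u > 0 with (1−u)(1+au)(1+bu) = mu, and it lies in (0,1)
    (∃! u : ℝ, 0 < u ∧ (1 - u) * (1 + a * u) * (1 + b * u) = m * u) ∧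
    (∀ u : ℝ, 0 < u → (1 - u) * (1 + a * u) * (1 + b * u) = m * u → u ∈ Set.Ioo (0 : ℝ) 1) ∧
    -- unique interior equilibrium of the kinetics, and it satisfies v* = u*
    (∃! p : ℝ × ℝ, 0 < p.1 ∧ 0 < p.2 ∧
      p.1 * (1 - p.1) - m * p.1 * p.2 / ((1 + a * p.1) * (1 + b * p.2)) = 0 ∧
      s * p.2 * (1 - p.2 / p.1) = 0) ∧
    (∀ p : ℝ × ℝ, 0 < p.1 → 0 < p.2 →
      p.1 * (1 - p.1) - m * p.1 * p.2 / ((1 + a * p.1) * (1 + b * p.2)) = 0 →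
      s * p.2 * (1 - p.2 / p.1) = 0 → p.2 = p.1) := by
  obtain ⟨u, ⟨hu, -⟩, hroot⟩ := exists_cubic_eq_mem_Ioo a b hm
  have hroot_unique := fun w (hw : 0 < w) hw_root =>
    eq_of_cubic_eq ha.le hb.le hab hw hu hw_root hroot
  refine ⟨⟨u, ⟨hu, hroot⟩, fun w ⟨hw, hw_root⟩ => hroot_unique w hw hw_root⟩,
    fun w hw hw_root => ⟨hw, lt_one_of_cubic_eq ha.le hb.le hm hw hw_root⟩,
    ⟨(u, u), ⟨hu, hu, (prey_diag_eq_zero_iff ha.le hb.le hu).2 hroot,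
      (predator_eq_zero_iff hs.ne' hu.ne' hu.ne').2 rfl⟩, ?_⟩,
    fun p hp₁ hp₂ _ hg => (predator_eq_zero_iff hs.ne' hp₁.ne' hp₂.ne').1 hg⟩
  rintro ⟨x, y⟩ ⟨hx, hy, hf, hg⟩
  obtain rfl : y = x := (predator_eq_zero_iff hs.ne' hx.ne' hy.ne').1 hg
  rw [hroot_unique y hx ((prey_diag_eq_zero_iff ha.le hb.le hx).1 hf)]
end
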